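/- Let G be a locally compact group and U a relatively compact open subset of G containing the identity such that G = ⋃_{n≥0} Uⁿ, and let V = U ∪ U⁻¹. Then the word length function ℓ_V is symmetric (ℓ_V(g⁻¹) = ℓ_V(g) for all g ∈ G and ℓ_V(1) = 0), satisfies ℓ_V ≤ ℓ_U pointwise, and there exists an integer n ≥ 1 with ℓ_U ≤ n·ℓ_V pointwise; in particular ℓ_U and ℓ_V are equivalent. -/

import Mathlib

open scoped Pointwise

/-! Since `V = U ∪ U⁻¹` is symmetric, so is `ℓ_V`, and `U ⊆ V` gives `ℓ_V ≤ ℓ_U`. Conversely `V`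
lies in the compact set `closure U ∪ (closure U)⁻¹`, which is covered by the increasing open sets
`U ^ (n + 1)`; hence `V ⊆ U ^ N` for one `N ≥ 1`, and every word of length `k` in `V` is a word of
length `N * k` in `U`. -/

/-- The word length function associated with a generating subset `U` of a group:
`ℓ_U g = min {n : g ∈ Uⁿ}`. -/
noncomputable def wordLength {G : Type*} [Group G] (U : Set G) (g : G) : ℕ :=
  sInf {n : ℕ | g ∈ U ^ n}

section WordLength

variable {G : Type*} [Group G] {U V : Set G} {g : G}

theorem wordLength_le_of_mem_pow {n : ℕ} (h : g ∈ U ^ n) : wordLength U g ≤ n :=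
  Nat.sInf_le h

theorem mem_pow_wordLength (h : ∃ n : ℕ, g ∈ U ^ n) : g ∈ U ^ wordLength U g :=
  Nat.sInf_mem h

theorem wordLength_one : wordLength U 1 = 0 :=
  Nat.eq_zero_of_le_zero (wordLength_le_of_mem_pow (n := 0) (Set.mem_one.mpr rfl))

theorem wordLength_inv (hU : U⁻¹ = U) (g : G) : wordLength U g⁻¹ = wordLength U g := by
  have hmem : ∀ n : ℕ, g⁻¹ ∈ U ^ n ↔ g ∈ U ^ n := fun n => by
    rw [← Set.mem_inv, ← inv_pow, hU]
  simp only [wordLength, hmem]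

theorem wordLength_le_wordLength_of_subset (hUV : U ⊆ V) (hg : ∃ n : ℕ, g ∈ U ^ n) :
    wordLength V g ≤ wordLength U g :=
  wordLength_le_of_mem_pow (Set.pow_subset_pow_left hUV (mem_pow_wordLength hg))

theorem wordLength_le_mul_of_subset_pow {N : ℕ} (hVU : V ⊆ U ^ N) (hg : ∃ n : ℕ, g ∈ V ^ n) :
    wordLength U g ≤ N * wordLength V g := by
  apply wordLength_le_of_mem_pow
  rw [pow_mul]
  exact Set.pow_subset_pow_left hVU (mem_pow_wordLength hg)

end WordLength

theorem IsCompact.exists_subset_pow_succ {G : Type*} [Group G] [TopologicalSpace G]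
    [ContinuousConstSMul G G] {K U : Set G} (hK : IsCompact K) (hU : IsOpen U) (hone : 1 ∈ U)
    (hKU : K ⊆ ⋃ n : ℕ, U ^ n) : ∃ N : ℕ, K ⊆ U ^ (N + 1) := by
  have hopen : ∀ n : ℕ, IsOpen (U ^ (n + 1)) := fun n => by
    rw [pow_succ]
    exact hU.mul_left
  have hmono : Monotone fun n : ℕ => U ^ (n + 1) := fun m n hmn =>
    Set.pow_subset_pow_right hone (Nat.succ_le_succ hmn)
  refine hK.elim_directed_cover _ hopen (hKU.trans ?_) hmono.directed_le
  exact Set.iUnion_mono fun n => Set.pow_subset_pow_right hone n.le_succ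

theorem wordLength_symmetrization_equivalent_general
    {G : Type*} [Group G] [TopologicalSpace G] [IsTopologicalGroup G]
    (U : Set G) (hUopen : IsOpen U) (hone : (1 : G) ∈ U)
    (hUrc : IsCompact (closure U))
    (hgen : (⋃ n : ℕ, U ^ n) = Set.univ) :
    (∀ g : G, wordLength (U ∪ U⁻¹) g⁻¹ = wordLength (U ∪ U⁻¹) g) ∧
    (wordLength (U ∪ U⁻¹) (1 : G) = 0) ∧
    (∀ g : G, wordLength (U ∪ U⁻¹) g ≤ wordLength U g) ∧
    (∃ n : ℕ, 1 ≤ n ∧ ∀ g : G, wordLength U g ≤ n * wordLength (U ∪ U⁻¹) g) := by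
  have hU : ∀ g : G, ∃ n : ℕ, g ∈ U ^ n := fun g =>
    Set.mem_iUnion.mp (hgen ▸ Set.mem_univ g)
  have hV : ∀ g : G, ∃ n : ℕ, g ∈ (U ∪ U⁻¹) ^ n := fun g =>
    (hU g).imp fun n => (Set.pow_subset_pow_left Set.subset_union_left ·)
  have hVK : U ∪ U⁻¹ ⊆ closure U ∪ (closure U)⁻¹ :=
    Set.union_subset_union subset_closure (Set.inv_subset_inv.mpr subset_closure)
  obtain ⟨N, hN⟩ := (hUrc.union hUrc.inv).exists_subset_pow_succ hUopen hone
    (hgen ▸ Set.subset_univ _)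
  refine ⟨wordLength_inv (by rw [Set.union_inv, inv_inv, Set.union_comm]), wordLength_one,
    fun g => wordLength_le_wordLength_of_subset Set.subset_union_left (hU g),
    N + 1, N.succ_pos, fun g => wordLength_le_mul_of_subset_pow (hVK.trans hN) (hV g)⟩

/-- For a relatively compact open generating subset `U ∋ 1` of a locally
compact group `G` and `V = U ∪ U⁻¹`, the word length function `ℓ_V` is symmetric,
satisfies `ℓ_V ≤ ℓ_U` pointwise, and `ℓ_U ≤ n · ℓ_V` for some integer `n ≥ 1`;
in particular `ℓ_U` and `ℓ_V` are equivalent. -/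
theorem wordLength_symmetrization_equivalent
    {G : Type*} [Group G] [TopologicalSpace G] [IsTopologicalGroup G]
    [LocallyCompactSpace G]
    (U : Set G) (hUopen : IsOpen U) (hone : (1 : G) ∈ U)
    (hUrc : IsCompact (closure U))
    (hgen : (⋃ n : ℕ, U ^ n) = Set.univ) :
    (∀ g : G, wordLength (U ∪ U⁻¹) g⁻¹ = wordLength (U ∪ U⁻¹) g) ∧
    (wordLength (U ∪ U⁻¹) (1 : G) = 0) ∧
    (∀ g : G, wordLength (U ∪ U⁻¹) g ≤ wordLength U g) ∧
    (∃ n : ℕ, 1 ≤ n ∧ ∀ g : G, wordLength U g ≤ n * wordLength (U ∪ U⁻¹) g) :=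
  wordLength_symmetrization_equivalent_general U hUopen hone hUrc hgen
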